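/- Let K be a field and R a discrete valuation ring containing K, with maximal ideal M. Let G be a finite group of K-algebra automorphisms of R, and define G₀ = {σ ∈ G : σ(x) − x ∈ M for all x ∈ R} and G₁ = {σ ∈ G₀ : σ(x) − x ∈ M² for all x ∈ M}. Assume that K is algebraically closed in the residue field R/M, and assume in addition that either (i) char K = 0, or (ii) char K = l > 0 and G contains no non-trivial normal l-subgroup. Then G₁ = {1}, G₀ is a cyclic group, and G₀ is contained in the center Z(G) of G. -/

import Mathlib

noncomputable section

open IsLocalRing

variable (K : Type*) [Field K] (R : Type*) [CommRing R] [IsDomain R]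
  [IsDiscreteValuationRing R] [Algebra K R]

/-- `G₀`: the subgroup of elements of `G` inducing the identity automorphism on the
residue field `R/M`, i.e. those `σ` with `σ x − x ∈ M` for all `x ∈ R`. -/
def inertiaOne (G : Subgroup (R ≃ₐ[K] R)) : Subgroup (R ≃ₐ[K] R) where
  carrier := {σ | σ ∈ G ∧ ∀ x : R, σ x - x ∈ maximalIdeal R}
  one_mem' := ⟨G.one_mem, fun x => by simp⟩
  mul_mem' := by
    rintro a b ⟨haG, ha⟩ ⟨hbG, hb⟩
    refine ⟨G.mul_mem haG hbG, fun x => ?_⟩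
    have h : (a * b) x - x = (a (b x) - b x) + (b x - x) := by
      rw [AlgEquiv.mul_apply]; ring
    rw [h]
    exact Ideal.add_mem _ (ha _) (hb x)
  inv_mem' := by
    rintro a ⟨haG, ha⟩
    refine ⟨G.inv_mem haG, fun x => ?_⟩
    have h2 : a (a⁻¹ x) = x := by
      rw [← AlgEquiv.mul_apply, mul_inv_cancel, AlgEquiv.one_apply]
    have h : a⁻¹ x - x = -(a (a⁻¹ x) - a⁻¹ x) := by rw [h2]; ring
    rw [h]
    exact neg_mem (ha _)

lemma mem_inertiaOne {G : Subgroup (R ≃ₐ[K] R)} {σ : R ≃ₐ[K] R} :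
    σ ∈ inertiaOne K R G ↔ σ ∈ G ∧ ∀ x : R, σ x - x ∈ maximalIdeal R :=
  Iff.rfl

/-- `G₁`: the subgroup of elements of `G₀` additionally inducing the identity on
`M/M²`, i.e. those `σ ∈ G₀` with `σ x − x ∈ M²` for all `x ∈ M`. -/
def inertiaTwo (G : Subgroup (R ≃ₐ[K] R)) : Subgroup (R ≃ₐ[K] R) where
  carrier := {σ | σ ∈ inertiaOne K R G ∧
    ∀ x ∈ maximalIdeal R, σ x - x ∈ (maximalIdeal R) ^ 2}
  one_mem' := ⟨(inertiaOne K R G).one_mem, fun x _ => by simp⟩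
  mul_mem' := by
    rintro a b ⟨haG, ha⟩ ⟨hbG, hb⟩
    refine ⟨(inertiaOne K R G).mul_mem haG hbG, fun x hx => ?_⟩
    have hbx : b x ∈ maximalIdeal R := by
      have h2 : b x = (b x - x) + x := by ring
      rw [h2]
      exact Ideal.add_mem _ (Ideal.pow_le_self two_ne_zero (hb x hx)) hx
    have h : (a * b) x - x = (a (b x) - b x) + (b x - x) := by
      rw [AlgEquiv.mul_apply]; ring
    rw [h]
    exact Ideal.add_mem _ (ha _ hbx) (hb x hx)
  inv_mem' := by
    rintro a ⟨haG, ha⟩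
    refine ⟨(inertiaOne K R G).inv_mem haG, fun x hx => ?_⟩
    have h0 : ∀ y : R, a⁻¹ y - y ∈ maximalIdeal R :=
      ((mem_inertiaOne K R).mp ((inertiaOne K R G).inv_mem haG)).2
    have hax : a⁻¹ x ∈ maximalIdeal R := by
      have h2 : a⁻¹ x = (a⁻¹ x - x) + x := by ring
      rw [h2]
      exact Ideal.add_mem _ (h0 x) hx
    have h2 : a (a⁻¹ x) = x := by
      rw [← AlgEquiv.mul_apply, mul_inv_cancel, AlgEquiv.one_apply]
    have h : a⁻¹ x - x = -(a (a⁻¹ x) - a⁻¹ x) := by rw [h2]; ring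
    rw [h]
    exact neg_mem (ha _ hax)


section Aux

variable {K R}

lemma mem_inertiaTwo {G : Subgroup (R ≃ₐ[K] R)} {σ : R ≃ₐ[K] R} :
    σ ∈ inertiaTwo K R G ↔ σ ∈ inertiaOne K R G ∧
      ∀ x ∈ maximalIdeal R, σ x - x ∈ (maximalIdeal R) ^ 2 :=
  Iff.rfl

lemma algEquiv_map_maximalIdeal (σ : R ≃ₐ[K] R) {x : R} (hx : x ∈ maximalIdeal R) :
    σ x ∈ maximalIdeal R := by
  rw [mem_maximalIdeal, mem_nonunits_iff] at hx ⊢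
  intro h
  apply hx
  have h2 := h.map σ.symm.toAlgHom.toRingHom
  simpa using h2

lemma algEquiv_map_pow_maximalIdeal (σ : R ≃ₐ[K] R) (t : ℕ) {x : R}
    (hx : x ∈ maximalIdeal R ^ t) : σ x ∈ maximalIdeal R ^ t := by
  induction t generalizing x with
  | zero => simp
  | succ n ih =>
    rw [pow_succ] at hx ⊢
    refine Submodule.mul_induction_on hx (fun a ha b hb => ?_) (fun a b ha hb => ?_)
    · rw [map_mul]; exact Ideal.mul_mem_mul (ih ha) (algEquiv_map_maximalIdeal σ hb)
    · rw [map_add]; exact add_mem ha hb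

lemma inertiaTwo_sub_mem {G : Subgroup (R ≃ₐ[K] R)} {σ : R ≃ₐ[K] R}
    (hσ : σ ∈ inertiaTwo K R G) (t : ℕ) (ht : 1 ≤ t) {y : R}
    (hy : y ∈ maximalIdeal R ^ t) : σ y - y ∈ maximalIdeal R ^ (t + 1) := by
  induction t generalizing y with
  | zero => omega
  | succ n ih =>
    rcases Nat.eq_zero_or_pos n with h0 | hpos
    · subst h0
      rw [pow_one] at hy
      simpa using hσ.2 y hy
    · rw [pow_succ] at hy
      refine Submodule.mul_induction_on hy (fun a ha b hb => ?_) (fun a b ha hb => ?_)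
      · have h1 : σ (a * b) - a * b = (σ a - a) * σ b + a * (σ b - b) := by
          rw [map_mul]; ring
        rw [h1]
        refine add_mem ?_ ?_
        · have h2 := Ideal.mul_mem_mul (ih hpos ha) (algEquiv_map_maximalIdeal σ hb)
          rwa [← pow_succ] at h2
        · have h2 := Ideal.mul_mem_mul ha (hσ.2 b hb)
          rwa [← pow_add] at h2
      · have h1 : σ (a + b) - (a + b) = (σ a - a) + (σ b - b) := by rw [map_add]; ring
        rw [h1]; exact add_mem ha hb

/-- The key lemma: an element of `G₁` of finite order invertible in `R` is trivial. -/
lemma inertiaTwo_eq_one {G : Subgroup (R ≃ₐ[K] R)} {σ : R ≃ₐ[K] R}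
    (hσ : σ ∈ inertiaTwo K R G) {n : ℕ} (hn : σ ^ n = 1) (hn0 : n ≠ 0)
    (hu : IsUnit (n : R)) : σ = 1 := by
  by_contra hne
  obtain ⟨x, hx⟩ : ∃ x : R, σ x ≠ x := by
    by_contra h
    push_neg at h
    exact hne (AlgEquiv.ext h)
  obtain ⟨d, hdx⟩ : ∃ d : R, σ x = x + d := ⟨σ x - x, by ring⟩
  have hd : d = σ x - x := by rw [hdx]; ring
  have hd0 : d ≠ 0 := by rw [hd]; exact sub_ne_zero_of_ne hx
  obtain ⟨ϖ, hϖ⟩ := IsDiscreteValuationRing.exists_irreducible R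
  obtain ⟨t, u, hdu⟩ := IsDiscreteValuationRing.eq_unit_mul_pow_irreducible hd0 hϖ
  have hMspan : maximalIdeal R = Ideal.span {ϖ} :=
    (IsDiscreteValuationRing.irreducible_iff_uniformizer ϖ).mp hϖ
  have ht0 : 1 ≤ t := by
    rcases Nat.eq_zero_or_pos t with h0 | h; swap
    · exact h
    exfalso
    have hdM : d ∈ maximalIdeal R := hd ▸ hσ.1.2 x
    rw [hdu, h0, pow_zero, mul_one, mem_maximalIdeal, mem_nonunits_iff] at hdM
    exact hdM u.isUnit
  have hdM : d ∈ maximalIdeal R ^ t := by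
    rw [hMspan, Ideal.span_singleton_pow, Ideal.mem_span_singleton, hdu]
    exact dvd_mul_left _ _
  have hdnM : d ∉ maximalIdeal R ^ (t + 1) := by
    rw [hMspan, Ideal.span_singleton_pow, Ideal.mem_span_singleton, hdu]
    rintro ⟨c, hc⟩
    have hϖ0 : (ϖ : R) ≠ 0 := hϖ.ne_zero
    have h2 : (u : R) = ϖ * c := by
      have h3 : (u : R) * ϖ ^ t = (ϖ * c) * ϖ ^ t := by
        rw [hc]; ring
      exact mul_right_cancel₀ (pow_ne_zero _ hϖ0) h3
    exact hϖ.not_isUnit (isUnit_of_dvd_unit ⟨c, h2⟩ u.isUnit)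
  -- each σ^j fixes d modulo M^(t+1)
  have hdiff : ∀ j : ℕ, (σ ^ j) d - d ∈ maximalIdeal R ^ (t + 1) := by
    intro j
    induction j with
    | zero => simpa using zero_mem (maximalIdeal R ^ (t + 1))
    | succ k ih =>
      have h1 : (σ ^ (k + 1)) d = (σ ^ k) (σ d) := by
        rw [pow_succ, AlgEquiv.mul_apply]
      have h2 : (σ ^ (k + 1)) d - d = (σ ^ k) (σ d - d) + ((σ ^ k) d - d) := by
        rw [h1, map_sub]; ring
      rw [h2]
      exact add_mem (algEquiv_map_pow_maximalIdeal _ _ (inertiaTwo_sub_mem hσ t ht0 hdM)) ih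
  have hsum : ∀ i : ℕ, (σ ^ i) x - x - i • d ∈ maximalIdeal R ^ (t + 1) := by
    intro i
    induction i with
    | zero => simpa using zero_mem (maximalIdeal R ^ (t + 1))
    | succ j ih =>
      have h1 : (σ ^ (j + 1)) x = (σ ^ j) x + (σ ^ j) d := by
        rw [pow_succ, AlgEquiv.mul_apply, hdx, map_add]
      have h2 : (σ ^ (j + 1)) x - x - (j + 1) • d
          = ((σ ^ j) x - x - j • d) + ((σ ^ j) d - d) := by
        rw [h1, succ_nsmul]; ring
      rw [h2]
      exact add_mem ih (hdiff j)
  have hnd : (n : R) * d ∈ maximalIdeal R ^ (t + 1) := by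
    have h1 := hsum n
    rw [hn] at h1
    simp only [AlgEquiv.one_apply, sub_self, zero_sub, nsmul_eq_mul] at h1
    simpa using neg_mem h1
  exact hdnM ((Ideal.unit_mul_mem_iff_mem _ hu).mp hnd)

lemma conj_mem_inertiaOne {G : Subgroup (R ≃ₐ[K] R)} {σ τ : R ≃ₐ[K] R}
    (hσ : σ ∈ inertiaOne K R G) (hτ : τ ∈ G) : τ * σ * τ⁻¹ ∈ inertiaOne K R G := by
  refine ⟨G.mul_mem (G.mul_mem hτ hσ.1) (G.inv_mem hτ), fun x => ?_⟩
  have h1 : (τ * σ * τ⁻¹) x - x = τ (σ (τ⁻¹ x) - τ⁻¹ x) := by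
    have h2 : τ (τ⁻¹ x) = x := by
      rw [← AlgEquiv.mul_apply, mul_inv_cancel, AlgEquiv.one_apply]
    rw [map_sub, h2, AlgEquiv.mul_apply, AlgEquiv.mul_apply]
  rw [h1]
  exact algEquiv_map_maximalIdeal τ (hσ.2 _)

lemma conj_mem_inertiaTwo {G : Subgroup (R ≃ₐ[K] R)} {σ τ : R ≃ₐ[K] R}
    (hσ : σ ∈ inertiaTwo K R G) (hτ : τ ∈ G) : τ * σ * τ⁻¹ ∈ inertiaTwo K R G := by
  refine ⟨conj_mem_inertiaOne hσ.1 hτ, fun x hx => ?_⟩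
  have h1 : (τ * σ * τ⁻¹) x - x = τ (σ (τ⁻¹ x) - τ⁻¹ x) := by
    have h2 : τ (τ⁻¹ x) = x := by
      rw [← AlgEquiv.mul_apply, mul_inv_cancel, AlgEquiv.one_apply]
    rw [map_sub, h2, AlgEquiv.mul_apply, AlgEquiv.mul_apply]
  rw [h1]
  exact algEquiv_map_pow_maximalIdeal τ 2 (hσ.2 _ (algEquiv_map_maximalIdeal τ⁻¹ hx))

lemma residue_eq_of_sub_mem {a b : R} (h : a - b ∈ maximalIdeal R) :
    residue R a = residue R b :=
  Ideal.Quotient.eq.mpr h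

end Aux

section Aux2

variable {K R}

open Classical in
/-- `ratio ϖ σ` is the element `a` with `σ ϖ = ϖ * a`. -/
noncomputable def ratio (ϖ : R) (σ : R ≃ₐ[K] R) : R :=
  if h : ϖ ∣ σ ϖ then h.choose else 0

lemma ratio_spec {ϖ : R} (hϖ : Irreducible ϖ) (σ : R ≃ₐ[K] R) :
    σ ϖ = ϖ * ratio ϖ σ := by
  have hmem : ϖ ∈ maximalIdeal R := by
    rw [(IsDiscreteValuationRing.irreducible_iff_uniformizer ϖ).mp hϖ]
    exact Ideal.mem_span_singleton_self ϖ
  have h : ϖ ∣ σ ϖ := by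
    have h2 := algEquiv_map_maximalIdeal σ hmem
    rwa [(IsDiscreteValuationRing.irreducible_iff_uniformizer ϖ).mp hϖ,
      Ideal.mem_span_singleton] at h2
  rw [ratio]
  rw [dif_pos h]
  exact h.choose_spec

lemma ratio_mul {ϖ : R} (hϖ : Irreducible ϖ) (σ τ : R ≃ₐ[K] R) :
    ratio ϖ (σ * τ) = σ (ratio ϖ τ) * ratio ϖ σ := by
  apply mul_left_cancel₀ hϖ.ne_zero
  have h1 : (σ * τ) ϖ = σ (τ ϖ) := AlgEquiv.mul_apply σ τ ϖ
  calc ϖ * ratio ϖ (σ * τ) = (σ * τ) ϖ := (ratio_spec hϖ _).symm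
    _ = σ (ϖ * ratio ϖ τ) := by rw [h1, ratio_spec hϖ τ]
    _ = σ ϖ * σ (ratio ϖ τ) := map_mul σ _ _
    _ = (ϖ * ratio ϖ σ) * σ (ratio ϖ τ) := by rw [ratio_spec hϖ σ]
    _ = ϖ * (σ (ratio ϖ τ) * ratio ϖ σ) := by ring

lemma ratio_one {ϖ : R} (hϖ : Irreducible ϖ) : ratio ϖ (1 : R ≃ₐ[K] R) = 1 := by
  apply mul_left_cancel₀ hϖ.ne_zero
  rw [mul_one]
  have h1 := ratio_spec (K := K) hϖ 1
  rw [AlgEquiv.one_apply] at h1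
  exact h1.symm

lemma ratio_sub_one_mem {ϖ : R} (hϖ : Irreducible ϖ) {G : Subgroup (R ≃ₐ[K] R)}
    {σ : R ≃ₐ[K] R} (hσ : σ ∈ inertiaOne K R G)
    (h : ratio ϖ σ - 1 ∈ maximalIdeal R) : σ ∈ inertiaTwo K R G := by
  have hMspan : maximalIdeal R = Ideal.span {ϖ} :=
    (IsDiscreteValuationRing.irreducible_iff_uniformizer ϖ).mp hϖ
  have hmem : ϖ ∈ maximalIdeal R := by
    rw [hMspan]; exact Ideal.mem_span_singleton_self ϖ
  refine ⟨hσ, fun x hx => ?_⟩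
  obtain ⟨r, hr⟩ : ϖ ∣ x := by rwa [hMspan, Ideal.mem_span_singleton] at hx
  have h1 : σ x - x = ϖ * ((ratio ϖ σ - 1) * σ r + (σ r - r)) := by
    rw [hr, map_mul, ratio_spec hϖ σ]; ring
  rw [h1, pow_two]
  refine Ideal.mul_mem_mul hmem ?_
  exact add_mem (Ideal.mul_mem_right _ _ h) (hσ.2 r)

lemma inertiaTwo_eq_bot (G : Subgroup (R ≃ₐ[K] R)) [Finite G]
    (hchar : ringChar K = 0 ∨ (ringChar K ≠ 0 ∧
      ∀ H : Subgroup G, H.Normal → IsPGroup (ringChar K) H → H = ⊥)) :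
    inertiaTwo K R G = ⊥ := by
  haveI := ringChar.charP K
  rcases hchar with hc | ⟨hl, hG⟩
  · -- characteristic zero
    haveI : CharZero K := by
      rw [hc] at ‹CharP K (ringChar K)›
      exact CharP.charP_to_charZero K
    rw [Subgroup.eq_bot_iff_forall]
    intro σ hσ
    set g : G := ⟨σ, hσ.1.1⟩ with hg
    have hn0 : orderOf g ≠ 0 := (orderOf_pos g).ne'
    have hσn : σ ^ orderOf g = 1 := by
      have h1 := pow_orderOf_eq_one g
      have h2 := congrArg (Subtype.val) h1
      simpa only [Subgroup.coe_pow, Subgroup.coe_one] using h2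
    have hu : IsUnit ((orderOf g : ℕ) : R) := by
      have h1 : ((orderOf g : ℕ) : R) = algebraMap K R ((orderOf g : ℕ) : K) := by
        rw [map_natCast]
      rw [h1]
      exact (isUnit_iff_ne_zero.mpr (Nat.cast_ne_zero.mpr hn0)).map (algebraMap K R)
    exact inertiaTwo_eq_one hσ hσn hn0 hu
  · -- characteristic l > 0
    set l := ringChar K with hldef
    have hp : l.Prime := (CharP.char_is_prime_or_zero K l).resolve_right hl
    set H : Subgroup G := (inertiaTwo K R G).comap G.subtype with hH
    have hnormal : H.Normal := by
      constructor
      intro h hh g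
      have h1 : (G.subtype) (g * h * g⁻¹)
          = (g : R ≃ₐ[K] R) * (h : R ≃ₐ[K] R) * (g : R ≃ₐ[K] R)⁻¹ := by
        simp
      rw [Subgroup.mem_comap, h1]
      exact conj_mem_inertiaTwo hh g.2
    have hpgroup : IsPGroup l H := by
      intro g
      set σ : R ≃ₐ[K] R := ((g : G) : R ≃ₐ[K] R) with hs
      have hσ : σ ∈ inertiaTwo K R G := Subgroup.mem_comap.mp g.2
      set n := orderOf g with hn
      have hn0 : n ≠ 0 := (orderOf_pos g).ne'
      set a := n.factorization l with ha
      set m := n / l ^ a with hm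
      have hσn : σ ^ n = 1 := by
        have h1 := pow_orderOf_eq_one g
        have h2 := congrArg (Subtype.val ∘ Subtype.val) h1
        simpa only [Function.comp_apply, Subgroup.coe_pow, Subgroup.coe_one] using h2
      refine ⟨a, ?_⟩
      have hm0 : m ≠ 0 := (Nat.ordCompl_pos l hn0).ne'
      have hcop : ¬ l ∣ m :=
        (Nat.Prime.coprime_iff_not_dvd hp).mp (Nat.coprime_ordCompl hp hn0)
      have hmK : ((m : ℕ) : K) ≠ 0 := by
        rw [Ne, CharP.cast_eq_zero_iff K l m]
        exact hcop
      have hu : IsUnit ((m : ℕ) : R) := by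
        have h1 : ((m : ℕ) : R) = algebraMap K R ((m : ℕ) : K) := by rw [map_natCast]
        rw [h1]
        exact (isUnit_iff_ne_zero.mpr hmK).map (algebraMap K R)
      have h2 : (σ ^ (l ^ a)) ^ m = 1 := by
        rw [← pow_mul, Nat.ordProj_mul_ordCompl_eq_self n l, hσn]
      have h3 : σ ^ (l ^ a) = 1 :=
        inertiaTwo_eq_one (pow_mem hσ _) h2 hm0 hu
      apply Subtype.ext
      apply Subtype.ext
      have h4 : (((g ^ l ^ a : H) : G) : R ≃ₐ[K] R) = σ ^ l ^ a := by
        push_cast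
        rfl
      rw [h4, h3]
      rfl
    have hbot : H = ⊥ := hG H hnormal hpgroup
    rw [Subgroup.eq_bot_iff_forall]
    intro σ hσ
    have h1 : (⟨σ, hσ.1.1⟩ : G) ∈ H := by
      rw [hH, Subgroup.mem_comap]
      exact hσ
    rw [hbot, Subgroup.mem_bot] at h1
    have h2 := congrArg Subtype.val h1
    simpa using h2

/-- The character `G₀ → (R/M)ˣ` given by `σ ↦ σ(ϖ)/ϖ mod M`. -/
noncomputable def theta {ϖ : R} (hϖ : Irreducible ϖ) (G : Subgroup (R ≃ₐ[K] R)) :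
    ↥(inertiaOne K R G) →* ResidueField R where
  toFun σ := residue R (ratio ϖ (σ : R ≃ₐ[K] R))
  map_one' := by
    show residue R (ratio ϖ ((1 : R ≃ₐ[K] R))) = 1
    rw [ratio_one hϖ, map_one]
  map_mul' σ τ := by
    show residue R (ratio ϖ ((σ : R ≃ₐ[K] R) * (τ : R ≃ₐ[K] R))) = _
    rw [ratio_mul hϖ, map_mul,
      residue_eq_of_sub_mem (σ.2.2 (ratio ϖ (τ : R ≃ₐ[K] R))), mul_comm]

lemma theta_apply {ϖ : R} (hϖ : Irreducible ϖ) (G : Subgroup (R ≃ₐ[K] R))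
    (σ : ↥(inertiaOne K R G)) :
    theta hϖ G σ = residue R (ratio ϖ (σ : R ≃ₐ[K] R)) := rfl

end Aux2
/-- Corollary 4.4: let `R` be a DVR containing a field `K`, `G` a finite group of
`K`-algebra automorphisms of `R`, `K` algebraically closed in the residue field `R/M`,
and assume that `char K = 0`, or `char K = l > 0` and `G` has no non-trivial normal
`l`-subgroup.  Then `G₁ = {1}`, `G₀` is cyclic, and `G₀ ⊆ Z(G)`. -/
theorem inertia_central_cyclic (G : Subgroup (R ≃ₐ[K] R)) [Finite G]
    (halg : ∀ x : ResidueField R, IsAlgebraic K x → x ∈ (algebraMap K (ResidueField R)).range)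
    (hchar : ringChar K = 0 ∨ (ringChar K ≠ 0 ∧
      ∀ H : Subgroup G, H.Normal → IsPGroup (ringChar K) H → H = ⊥)) :
    inertiaTwo K R G = ⊥ ∧
    IsCyclic ↥(inertiaOne K R G) ∧
    (∀ σ ∈ inertiaOne K R G, ∀ τ ∈ G, σ * τ = τ * σ) := by

  obtain ⟨ϖ, hϖ⟩ := IsDiscreteValuationRing.exists_irreducible R
  have h2 : inertiaTwo K R G = ⊥ := inertiaTwo_eq_bot G hchar
  haveI : Finite ↥(inertiaOne K R G) :=
    Finite.of_injective (fun σ => (⟨σ.1, σ.2.1⟩ : G)) (by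
      intro a b h
      apply Subtype.ext
      simp only [Subtype.mk.injEq] at h
      exact h)
  have hker : ∀ ρ : ↥(inertiaOne K R G), theta hϖ G ρ = 1 → ρ = 1 := by
    intro ρ hρ
    have h3 : residue R (ratio ϖ (ρ : R ≃ₐ[K] R)) = residue R 1 := by
      rw [← theta_apply hϖ G ρ, hρ, map_one]
    have h4 : (ρ : R ≃ₐ[K] R) ∈ inertiaTwo K R G :=
      ratio_sub_one_mem hϖ ρ.2 (Ideal.Quotient.eq.mp h3)
    rw [h2, Subgroup.mem_bot] at h4
    exact Subtype.ext h4
  have hinj : Function.Injective (theta hϖ G) := by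
    intro a b hab
    have h5 : theta hϖ G (a⁻¹ * b) = 1 := by
      rw [map_mul, ← hab, ← map_mul, inv_mul_cancel, map_one]
    have h6 := hker _ h5
    rw [inv_mul_eq_one] at h6
    exact h6
  refine ⟨h2, isCyclic_of_subgroup_isDomain (theta hϖ G) hinj, ?_⟩
  intro σ hσ τ hτ
  set ρ : R ≃ₐ[K] R := τ * σ * τ⁻¹ with hρdef
  have hρ : ρ ∈ inertiaOne K R G := conj_mem_inertiaOne hσ hτ
  set s : ↥(inertiaOne K R G) := ⟨σ, hσ⟩ with hsdef
  -- the theta value of σ lies in (the image of) K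
  have hsN : theta hϖ G s ^ orderOf s = 1 := by
    rw [← map_pow, pow_orderOf_eq_one, map_one]
  have hNpos : orderOf s ≠ 0 := (orderOf_pos s).ne'
  have halg_s : IsAlgebraic K (theta hϖ G s) := by
    refine ⟨Polynomial.X ^ orderOf s - Polynomial.C 1,
      (Polynomial.monic_X_pow_sub_C 1 hNpos).ne_zero, ?_⟩
    simp [hsN]
  obtain ⟨k, hk⟩ := halg (theta hϖ G s) halg_s
  have hkr : residue R (algebraMap K R k) = residue R (ratio ϖ σ) := by
    have h7 : residue R (algebraMap K R k) = algebraMap K (ResidueField R) k := rfl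
    rw [h7, hk, theta_apply]
  have haσ : ratio ϖ σ - algebraMap K R k ∈ maximalIdeal R :=
    Ideal.Quotient.eq.mp hkr.symm
  have hτa : residue R (τ (ratio ϖ σ)) = residue R (ratio ϖ σ) := by
    have h8 : τ (ratio ϖ σ) - algebraMap K R k ∈ maximalIdeal R := by
      have h9 : τ (ratio ϖ σ) - algebraMap K R k = τ (ratio ϖ σ - algebraMap K R k) := by
        rw [map_sub, AlgEquiv.commutes]
      rw [h9]
      exact algEquiv_map_maximalIdeal τ haσ
    exact (residue_eq_of_sub_mem h8).trans hkr
  set c : R := ratio ϖ τ⁻¹ with hcdef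
  have hc : τ⁻¹ ϖ = ϖ * c := ratio_spec hϖ τ⁻¹
  have hπ2 : ϖ = τ ϖ * τ c := by
    have h10 := congrArg τ hc
    rw [map_mul, ← AlgEquiv.mul_apply, mul_inv_cancel, AlgEquiv.one_apply] at h10
    exact h10
  have hτϖ0 : τ ϖ ≠ 0 := by
    intro h
    exact hϖ.ne_zero (by simpa using congrArg τ.symm h)
  have hτc_unit : IsUnit (τ c) := by
    have h11 := ratio_mul hϖ τ τ⁻¹
    rw [mul_inv_cancel, ratio_one hϖ] at h11
    exact IsUnit.of_mul_eq_one _ h11.symm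
  have hcancel : τ c * ratio ϖ ρ = τ (ratio ϖ σ) * τ (σ c) := by
    apply mul_left_cancel₀ hτϖ0
    calc τ ϖ * (τ c * ratio ϖ ρ) = (τ ϖ * τ c) * ratio ϖ ρ := by ring
      _ = ϖ * ratio ϖ ρ := by rw [← hπ2]
      _ = ρ ϖ := (ratio_spec hϖ ρ).symm
      _ = τ (σ (ϖ * c)) := by rw [hρdef, AlgEquiv.mul_apply, AlgEquiv.mul_apply, hc]
      _ = τ ((ϖ * ratio ϖ σ) * σ c) := by rw [map_mul σ, ratio_spec hϖ σ]
      _ = (τ ϖ * τ (ratio ϖ σ)) * τ (σ c) := by rw [map_mul, map_mul]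
      _ = τ ϖ * (τ (ratio ϖ σ) * τ (σ c)) := by ring
  have hτσc : residue R (τ (σ c)) = residue R (τ c) := by
    apply residue_eq_of_sub_mem
    have h12 : τ (σ c) - τ c = τ (σ c - c) := by rw [map_sub]
    rw [h12]
    exact algEquiv_map_maximalIdeal τ (hσ.2 c)
  have hres : residue R (τ c) * residue R (ratio ϖ ρ)
      = residue R (ratio ϖ σ) * residue R (τ c) := by
    have h13 := congrArg (residue R) hcancel
    rw [map_mul, map_mul, hτa, hτσc] at h13
    exact h13
  have hτc0 : residue R (τ c) ≠ 0 := (hτc_unit.map (residue R)).ne_zero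
  have hfin : residue R (ratio ϖ ρ) = residue R (ratio ϖ σ) :=
    mul_left_cancel₀ hτc0 (hres.trans (mul_comm _ _))
  have heq : (⟨ρ, hρ⟩ : ↥(inertiaOne K R G)) = s := by
    apply hinj
    rw [theta_apply, theta_apply]
    exact hfin
  have hρσ : ρ = σ := congrArg Subtype.val heq
  have h14 : τ * σ * τ⁻¹ = σ := hρσ
  calc σ * τ = (τ * σ * τ⁻¹) * τ := by rw [h14]
    _ = τ * σ := by group
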